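/- arXiv:1709.04552 — 2 statements merged into one kernel-verified Lean document; each statement's English description precedes it below -/
import Mathlib

section
/- Petermichl's operator 𝒫f = ∑_{I ∈ 𝒟⁺} ⟨f, h_I⟩ (h_{I⁻} − h_{I⁺}) is bounded on L²([0,∞)) with ‖𝒫f‖₂² ≤ 2‖f‖₂². -/
open MeasureTheory Set

/-- The standard dyadic interval `[k·2^{-j}, (k+1)·2^{-j})` contained in `[0,∞)`. -/
def dyadicI (j : ℤ) (k : ℕ) : Set ℝ :=
  Set.Ico ((k : ℝ) * (2:ℝ) ^ (-j)) (((k : ℝ) + 1) * (2:ℝ) ^ (-j))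

/-- The dyadic ultrametric on `[0,∞)`: the infimum of the lengths of the
dyadic intervals containing both points. -/
noncomputable def delta (x y : ℝ) : ℝ :=
  if x = y then 0
  else sInf {L : ℝ | ∃ j : ℤ, ∃ k : ℕ, L = (2:ℝ) ^ (-j) ∧ x ∈ dyadicI j k ∧ y ∈ dyadicI j k}

/-- The Haar function of the dyadic interval `dyadicI j k`. -/
noncomputable def haar (j : ℤ) (k : ℕ) (t : ℝ) : ℝ :=
  Real.sqrt ((2:ℝ) ^ j) *
    ((dyadicI (j+1) (2*k)).indicator (fun _ => (1:ℝ)) t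
      - (dyadicI (j+1) (2*k+1)).indicator (fun _ => (1:ℝ)) t)

/-- Petermichl's kernel on `[0,∞)`. -/
noncomputable def Pker (x y : ℝ) : ℝ :=
  ∑' p : ℤ × ℕ,
    haar p.1 p.2 y * (haar (p.1+1) (2*p.2) x - haar (p.1+1) (2*p.2+1) x)

/-- The elementary building block `Ω_J` associated with the dyadic interval `J = dyadicI j k`. -/
noncomputable def Omega (j : ℤ) (k : ℕ) (x y : ℝ) : ℝ :=
  ((dyadicI (j+1) (2*k)).indicator (fun _ => (1:ℝ)) y
    - (dyadicI (j+1) (2*k+1)).indicator (fun _ => (1:ℝ)) y) *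
  (((dyadicI (j+2) (4*k+1)).indicator (fun _ => (1:ℝ)) x
      + (dyadicI (j+2) (4*k+2)).indicator (fun _ => (1:ℝ)) x)
    - ((dyadicI (j+2) (4*k)).indicator (fun _ => (1:ℝ)) x
      + (dyadicI (j+2) (4*k+3)).indicator (fun _ => (1:ℝ)) x))

/-- The scale truncation `P^{l,m}` of Petermichl's kernel: only the dyadic
intervals with `2^l ≤ |I| < 2^m` are kept. -/
noncomputable def PkerScale (l m : ℤ) (x y : ℝ) : ℝ :=
  ∑' p : ℤ × ℕ,
    if (2:ℝ) ^ l ≤ (2:ℝ) ^ (-p.1) ∧ (2:ℝ) ^ (-p.1) < (2:ℝ) ^ m then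
      haar p.1 p.2 y * (haar (p.1+1) (2*p.2) x - haar (p.1+1) (2*p.2+1) x)
    else 0

/-- The metric truncation `P_{l,m}` of Petermichl's kernel. -/
noncomputable def PkerMetric (l m : ℤ) (x y : ℝ) : ℝ :=
  if (2:ℝ) ^ l ≤ delta x y ∧ delta x y < (2:ℝ) ^ m then Pker x y else 0


/-- Petermichl's operator `𝒫 f = ∑_{I ∈ 𝒟⁺} ⟨f, h_I⟩ (h_{I⁻} − h_{I⁺})`. -/
noncomputable def Pop (f : ℝ → ℝ) (x : ℝ) : ℝ :=
  ∑' p : ℤ × ℕ,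
    (∫ y in Set.Ici (0:ℝ), f y * haar p.1 p.2 y) *
      (haar (p.1+1) (2*p.2) x - haar (p.1+1) (2*p.2+1) x)


/-!
Up to the factor `√2`, the functions `h_{I⁻} − h_{I⁺}`, `I ∈ 𝒟⁺`, again form an orthonormal
family, because distinct intervals have distinct children. Hence `∑ ⟨f, h_I⟩ (h_{I⁻} − h_{I⁺})`
converges in `L²` to some `T` with `‖T‖² = 2 ∑ ⟨f, h_I⟩² ≤ 2‖f‖²` by Bessel's inequality.
A subsequence of the partial sums converges to `T` a.e., so at almost every point where the
series defining `𝒫f` is summable its sum is `T`; elsewhere `𝒫f` is `0` by the convention for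
`tsum`. Thus `|𝒫f| ≤ |T|` a.e.
-/

open Filter Topology
open scoped ENNReal

local notation "μ₊" => volume.restrict (Ici (0:ℝ))

lemma mem_dyadicI_iff {j : ℤ} {k : ℕ} {x : ℝ} :
    x ∈ dyadicI j k ↔ 0 ≤ x ∧ ⌊x * 2 ^ j⌋₊ = k := by
  have h : (0:ℝ) < 2 ^ j := by positivity
  rw [dyadicI, mem_Ico, zpow_neg, ← div_eq_mul_inv, ← div_eq_mul_inv, div_le_iff₀ h,
    lt_div_iff₀ h]
  constructor
  · rintro ⟨h₁, h₂⟩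
    have hx : 0 ≤ x := nonneg_of_mul_nonneg_left ((Nat.cast_nonneg k).trans h₁) h
    exact ⟨hx, (Nat.floor_eq_iff (by positivity)).2 ⟨h₁, h₂⟩⟩
  · rintro ⟨hx, rfl⟩
    exact ⟨Nat.floor_le (by positivity), Nat.lt_floor_add_one _⟩

lemma floor_mul_two_zpow_of_le {x : ℝ} {j j' : ℤ} (h : j ≤ j') :
    ⌊x * 2 ^ j⌋₊ = ⌊x * 2 ^ j'⌋₊ / 2 ^ (j' - j).toNat := by
  rw [← Nat.floor_div_natCast]
  congr 1
  push_cast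
  rw [← zpow_natCast, Int.toNat_of_nonneg (by omega), mul_div_assoc, ← zpow_sub₀ two_ne_zero,
    sub_sub_cancel]

lemma mem_dyadicI_of_le {j j' : ℤ} {k' : ℕ} {x : ℝ} (h : j ≤ j') (hx : x ∈ dyadicI j' k') :
    x ∈ dyadicI j (k' / 2 ^ (j' - j).toNat) := by
  rw [mem_dyadicI_iff] at hx ⊢
  exact ⟨hx.1, by rw [floor_mul_two_zpow_of_le h, hx.2]⟩

lemma dyadicI_succ_subset {j : ℤ} {k m : ℕ} (h : m / 2 = k) : dyadicI (j + 1) m ⊆ dyadicI j k :=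
  fun x hx => by simpa [h] using mem_dyadicI_of_le (le_add_of_nonneg_right zero_le_one) hx

lemma eq_of_mem_dyadicI {j : ℤ} {k k' : ℕ} {x : ℝ} (hx : x ∈ dyadicI j k)
    (hx' : x ∈ dyadicI j k') : k = k' :=
  (mem_dyadicI_iff.1 hx).2.symm.trans (mem_dyadicI_iff.1 hx').2

lemma dyadicI_subset_Ici (j : ℤ) (k : ℕ) : dyadicI j k ⊆ Ici 0 :=
  fun _ hx => (mem_dyadicI_iff.1 hx).1

lemma volume_dyadicI (j : ℤ) (k : ℕ) : μ₊ (dyadicI j k) = ENNReal.ofReal (2 ^ (-j)) := by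
  rw [Measure.restrict_eq_self _ (dyadicI_subset_Ici j k), dyadicI, Real.volume_Ico]
  ring_nf

lemma haar_eq_zero_of_notMem {j : ℤ} {k : ℕ} {x : ℝ} (hx : x ∉ dyadicI j k) : haar j k x = 0 := by
  rw [haar, indicator_of_notMem fun h => hx (dyadicI_succ_subset (by omega) h),
    indicator_of_notMem fun h => hx (dyadicI_succ_subset (by omega) h), sub_zero, mul_zero]

lemma haar_eq_of_mem {j : ℤ} {k m : ℕ} {x : ℝ} (hx : x ∈ dyadicI (j + 1) m) :
    haar j k x = √(2 ^ j) * ((if m = 2 * k then 1 else 0) - (if m = 2 * k + 1 then 1 else 0)) := by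
  have indicator_eq (n : ℕ) : (dyadicI (j + 1) n).indicator (fun _ => (1:ℝ)) x =
      if m = n then 1 else 0 := by
    by_cases h : m = n
    · rw [if_pos h, indicator_of_mem (h ▸ hx)]
    · rw [if_neg h, indicator_of_notMem fun h' => h (eq_of_mem_dyadicI hx h')]
  rw [haar, indicator_eq, indicator_eq]

-- `haar j k` is constant on `dyadicI j' k'`, the support of `haar j' k'`.
lemma exists_haar_mul_haar_of_lt {j j' : ℤ} (h : j < j') (k k' : ℕ) :
    ∃ c : ℝ, ∀ x, haar j k x * haar j' k' x = c * haar j' k' x := by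
  set m := k' / 2 ^ (j' - (j + 1)).toNat
  refine ⟨√(2 ^ j) * ((if m = 2 * k then 1 else 0) - (if m = 2 * k + 1 then 1 else 0)),
    fun x => ?_⟩
  by_cases hx : x ∈ dyadicI j' k'
  · rw [haar_eq_of_mem (mem_dyadicI_of_le (by omega) hx)]
  · rw [haar_eq_zero_of_notMem hx, mul_zero, mul_zero]

lemma haar_mul_haar_of_ne {j : ℤ} {k k' : ℕ} (h : k ≠ k') (x : ℝ) :
    haar j k x * haar j k' x = 0 := by
  by_cases hx : x ∈ dyadicI j k
  · rw [haar_eq_zero_of_notMem fun hx' => h (eq_of_mem_dyadicI hx hx'), mul_zero]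
  · rw [haar_eq_zero_of_notMem hx, zero_mul]

lemma haar_mul_self (j : ℤ) (k : ℕ) (x : ℝ) :
    haar j k x * haar j k x = 2 ^ j * (dyadicI j k).indicator (fun _ => 1) x := by
  by_cases hx : x ∈ dyadicI j k
  · obtain ⟨m, hm⟩ : ∃ m, x ∈ dyadicI (j + 1) m :=
      ⟨_, mem_dyadicI_iff.2 ⟨(mem_dyadicI_iff.1 hx).1, rfl⟩⟩
    have hmk : m / 2 = k := eq_of_mem_dyadicI (dyadicI_succ_subset rfl hm) hx
    have hsq : √(2 ^ j) * √(2 ^ j) = (2 : ℝ) ^ j := Real.mul_self_sqrt (by positivity)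
    rw [haar_eq_of_mem hm, indicator_of_mem hx]
    rcases (by omega : m = 2 * k ∨ m = 2 * k + 1) with rfl | rfl <;> simp [hsq]
  · rw [haar_eq_zero_of_notMem hx, indicator_of_notMem hx]
    ring

lemma measurableSet_dyadicI (j : ℤ) (k : ℕ) : MeasurableSet (dyadicI j k) := measurableSet_Ico

lemma measurable_haar (j : ℤ) (k : ℕ) : Measurable (haar j k) :=
  ((measurable_const.indicator (measurableSet_dyadicI _ _)).sub
    (measurable_const.indicator (measurableSet_dyadicI _ _))).const_mul _

lemma memLp_indicator_dyadicI (p : ℝ≥0∞) (j : ℤ) (k : ℕ) :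
    MemLp ((dyadicI j k).indicator fun _ => (1 : ℝ)) p μ₊ :=
  memLp_indicator_const p (measurableSet_dyadicI j k) 1
    (Or.inr (by rw [volume_dyadicI]; exact ENNReal.ofReal_ne_top))

lemma memLp_haar (p : ℝ≥0∞) (j : ℤ) (k : ℕ) : MemLp (haar j k) p μ₊ :=
  ((memLp_indicator_dyadicI p _ _).sub (memLp_indicator_dyadicI p _ _)).const_mul _

lemma integral_indicator_dyadicI (j : ℤ) (k : ℕ) :
    ∫ x in Ici 0, (dyadicI j k).indicator (fun _ => (1 : ℝ)) x = 2 ^ (-j) := by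
  rw [integral_indicator_const _ (measurableSet_dyadicI j k), Measure.real, volume_dyadicI,
    ENNReal.toReal_ofReal (by positivity), smul_eq_mul, mul_one]

lemma integral_haar (j : ℤ) (k : ℕ) : ∫ x in Ici 0, haar j k x = 0 := by
  simp only [haar]
  rw [integral_const_mul, integral_sub (memLp_one_iff_integrable.1 (memLp_indicator_dyadicI 1 _ _))
    (memLp_one_iff_integrable.1 (memLp_indicator_dyadicI 1 _ _)), integral_indicator_dyadicI,
    integral_indicator_dyadicI, sub_self, mul_zero]

lemma integral_haar_mul_self (j : ℤ) (k : ℕ) : ∫ x in Ici 0, haar j k x * haar j k x = 1 := by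
  simp_rw [haar_mul_self]
  rw [integral_const_mul, integral_indicator_dyadicI, ← zpow_add₀ two_ne_zero, add_neg_cancel,
    zpow_zero]

lemma integral_haar_mul_haar (p q : ℤ × ℕ) :
    ∫ x in Ici 0, haar p.1 p.2 x * haar q.1 q.2 x = if p = q then 1 else 0 := by
  split_ifs with hpq
  · rw [hpq, integral_haar_mul_self]
  rcases lt_trichotomy p.1 q.1 with h | h | h
  · obtain ⟨c, hc⟩ := exists_haar_mul_haar_of_lt h p.2 q.2
    simp_rw [hc]
    rw [integral_const_mul, integral_haar, mul_zero]
  · have hk : p.2 ≠ q.2 := fun h' => hpq (Prod.ext h h')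
    simp_rw [h, haar_mul_haar_of_ne hk, integral_zero]
  · obtain ⟨c, hc⟩ := exists_haar_mul_haar_of_lt h q.2 p.2
    simp_rw [mul_comm (haar p.1 p.2 _), hc]
    rw [integral_const_mul, integral_haar, mul_zero]

/-- Bessel's inequality for the coefficients of `x` along `v`, resummed along `w`. -/
theorem Orthonormal.exists_hasSum_inner_smul {𝕜 E ι : Type*} [RCLike 𝕜] [NormedAddCommGroup E]
    [InnerProductSpace 𝕜 E] [CompleteSpace E] {v w : ι → E}
    (hv : Orthonormal 𝕜 v) (hw : Orthonormal 𝕜 w) (x : E) :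
    ∃ T, HasSum (fun i => inner 𝕜 (v i) x • w i) T ∧ ‖T‖ ≤ ‖x‖ := by
  have hc : Memℓp (fun i => inner 𝕜 (v i) x) 2 :=
    memℓp_gen (by simpa using hv.inner_products_summable x)
  refine ⟨hw.orthogonalFamily.linearIsometry ⟨_, hc⟩,
    hw.orthogonalFamily.hasSum_linearIsometry ⟨_, hc⟩, ?_⟩
  rw [LinearIsometry.norm_map, ← pow_le_pow_iff_left₀ (norm_nonneg _) (norm_nonneg _) two_ne_zero]
  have hnorm := lp.norm_rpow_eq_tsum (p := 2) (by norm_num) ⟨_, hc⟩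
  norm_num at hnorm
  rw [hnorm]
  exact hv.tsum_inner_products_le x

theorem Orthonormal.inv_sqrt_two_smul_sub {E ι κ : Type*} [NormedAddCommGroup E]
    [InnerProductSpace ℝ E] {v : ι → E} (hv : Orthonormal ℝ v) {σ τ : κ → ι}
    (hσ : σ.Injective) (hτ : τ.Injective) (hστ : ∀ k l, σ k ≠ τ l) :
    Orthonormal ℝ fun k => (√2)⁻¹ • (v (σ k) - v (τ k)) := by
  classical
  rw [orthonormal_iff_ite] at hv ⊢
  intro k l
  have hsq : (√2)⁻¹ * (√2)⁻¹ * 2 = (1 : ℝ) := by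
    rw [← mul_inv, Real.mul_self_sqrt zero_le_two, inv_mul_cancel₀ two_ne_zero]
  simp only [real_inner_smul_left, real_inner_smul_right, inner_sub_left, inner_sub_right, hv,
    hσ.eq_iff, hτ.eq_iff, hστ, (hστ l k).symm, if_false]
  split_ifs <;> linarith

namespace MeasureTheory

variable {α E ι : Type*} {m : MeasurableSpace α} {μ : Measure α}

theorem Lp.ae_norm_tsum_le_of_hasSum [NormedAddCommGroup E] [Countable ι] {p : ℝ≥0∞}
    [Fact (1 ≤ p)] {F : ι → Lp E p μ} {T : Lp E p μ} (hF : HasSum F T) {f : ι → α → E}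
    (hf : ∀ i, F i =ᵐ[μ] f i) : ∀ᵐ x ∂μ, ‖∑' i, f i x‖ ≤ ‖T x‖ := by
  obtain ⟨ns, hns, hlim⟩ := (tendstoInMeasure_of_tendsto_Lp hF).exists_seq_tendsto_ae'
  filter_upwards [hlim, ae_all_iff.2 fun n => Lp.coeFn_fun_finsetSum (ns n) F, ae_all_iff.2 hf]
    with x hlim hsum hfx
  by_cases hs : Summable fun i => f i x
  · have hT : Tendsto (fun n => ∑ i ∈ ns n, f i x) atTop (𝓝 (T x)) := by
      simpa only [hsum, hfx] using hlim
    rw [tendsto_nhds_unique (hs.hasSum.comp hns) hT]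
  · simp [tsum_eq_zero_of_not_summable hs]

theorem L2.integral_sq_eq_norm_sq (g : Lp ℝ 2 μ) : ∫ x, g x ^ 2 ∂μ = ‖g‖ ^ 2 := by
  rw [← real_inner_self_eq_norm_sq, L2.inner_def]
  simp [sq]

theorem MemLp.integral_sq_eq_norm_toLp_sq {f : α → ℝ} (hf : MemLp f 2 μ) :
    ∫ x, f x ^ 2 ∂μ = ‖hf.toLp f‖ ^ 2 := by
  rw [← L2.integral_sq_eq_norm_sq]
  exact integral_congr_ae (hf.coeFn_toLp.mono fun x hx => by simp only [hx])

end MeasureTheory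

noncomputable def haarLp (p : ℤ × ℕ) : Lp ℝ 2 μ₊ := (memLp_haar 2 p.1 p.2).toLp _

lemma inner_haarLp (p : ℤ × ℕ) {f : ℝ → ℝ} (hf : MemLp f 2 μ₊) :
    inner ℝ (haarLp p) (hf.toLp f) = ∫ y in Ici 0, f y * haar p.1 p.2 y := by
  rw [L2.inner_def]
  refine integral_congr_ae ?_
  filter_upwards [(memLp_haar 2 p.1 p.2).coeFn_toLp, hf.coeFn_toLp] with x hx hfx
  rw [haarLp, hx, hfx, real_inner_eq_re_inner, RCLike.inner_apply, conj_trivial, RCLike.re_to_real]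

lemma orthonormal_haarLp : Orthonormal ℝ haarLp :=
  orthonormal_iff_ite.2 fun p q => (inner_haarLp p (memLp_haar 2 q.1 q.2)).trans <| by
    simp_rw [mul_comm (haar q.1 q.2 _)]
    exact integral_haar_mul_haar p q

lemma orthonormal_haarLp_sub : Orthonormal ℝ fun p : ℤ × ℕ =>
    (√2)⁻¹ • (haarLp (p.1 + 1, 2 * p.2) - haarLp (p.1 + 1, 2 * p.2 + 1)) :=
  orthonormal_haarLp.inv_sqrt_two_smul_sub
    (fun p q h => by simp only [Prod.ext_iff] at h ⊢; omega)
    (fun p q h => by simp only [Prod.ext_iff] at h ⊢; omega)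
    (fun p q h => by simp only [Prod.ext_iff] at h; omega)

lemma coeFn_inner_haarLp_smul_haarLp_sub {f : ℝ → ℝ} (hf : MemLp f 2 μ₊) (p : ℤ × ℕ) :
    (inner ℝ (haarLp p) (√2 • hf.toLp f) •
        ((√2)⁻¹ • (haarLp (p.1 + 1, 2 * p.2) - haarLp (p.1 + 1, 2 * p.2 + 1))) :
        Lp ℝ 2 μ₊) =ᵐ[μ₊] fun x => (∫ y in Ici 0, f y * haar p.1 p.2 y) *
      (haar (p.1 + 1) (2 * p.2) x - haar (p.1 + 1) (2 * p.2 + 1) x) := by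
  have hcoeff : √2 * (∫ y in Ici 0, f y * haar p.1 p.2 y) * (√2)⁻¹ =
      ∫ y in Ici 0, f y * haar p.1 p.2 y := by
    field_simp
  rw [real_inner_smul_right, inner_haarLp, smul_smul, hcoeff]
  filter_upwards [Lp.coeFn_smul (E := ℝ) (∫ y in Ici 0, f y * haar p.1 p.2 y) (haarLp _ - haarLp _),
    Lp.coeFn_sub (haarLp (p.1 + 1, 2 * p.2)) (haarLp (p.1 + 1, 2 * p.2 + 1)),
    (memLp_haar 2 (p.1 + 1) (2 * p.2)).coeFn_toLp,
    (memLp_haar 2 (p.1 + 1) (2 * p.2 + 1)).coeFn_toLp] with x h₁ h₂ h₃ h₄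
  rw [h₁, Pi.smul_apply, h₂, Pi.sub_apply, haarLp, haarLp, h₃, h₄, smul_eq_mul]

/-- Petermichl's operator is bounded on `L²([0,∞))` with `‖𝒫f‖₂² ≤ 2‖f‖₂²`. -/
theorem Pop_L2_bounded (f : ℝ → ℝ)
    (hf : MeasureTheory.MemLp f 2 (volume.restrict (Set.Ici (0:ℝ)))) :
    MeasureTheory.MemLp (Pop f) 2 (volume.restrict (Set.Ici (0:ℝ))) ∧
    ∫ x in Set.Ici (0:ℝ), (Pop f x) ^ 2 ≤ 2 * ∫ x in Set.Ici (0:ℝ), (f x) ^ 2 := by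
  obtain ⟨T, hT, hT_le⟩ :=
    orthonormal_haarLp.exists_hasSum_inner_smul orthonormal_haarLp_sub (√2 • hf.toLp f)
  have hdom : ∀ᵐ x ∂μ₊, ‖Pop f x‖ ≤ ‖T x‖ :=
    Lp.ae_norm_tsum_le_of_hasSum hT (coeFn_inner_haarLp_smul_haarLp_sub hf)
  have hmeas : Measurable (Pop f) :=
    Measurable.tsum fun p => ((measurable_haar _ _).sub (measurable_haar _ _)).const_mul _
  have hmem : MemLp (Pop f) 2 μ₊ := (Lp.memLp T).of_le hmeas.aestronglyMeasurable hdom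
  refine ⟨hmem, ?_⟩
  calc ∫ x in Ici 0, Pop f x ^ 2
      ≤ ∫ x in Ici 0, T x ^ 2 :=
        integral_mono_ae hmem.integrable_sq (Lp.memLp T).integrable_sq
          (hdom.mono fun x hx => sq_le_sq.2 hx)
    _ = ‖T‖ ^ 2 := L2.integral_sq_eq_norm_sq T
    _ ≤ ‖√2 • hf.toLp f‖ ^ 2 := by gcongr
    _ = 2 * ∫ x in Ici 0, f x ^ 2 := by
      rw [norm_smul, mul_pow, Real.norm_eq_abs, sq_abs, Real.sq_sqrt zero_le_two,
        hf.integral_sq_eq_norm_toLp_sq]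
end

section
/- Petermichl's kernel satisfies the Hölder (Lipschitz) regularity estimate: |P(x',y) − P(x,y)| ≤ 18√2 · δ(x,x')/δ(x,y)² whenever 2δ(x,x') ≤ δ(x,y); and |P(x,y') − P(x,y)| ≤ 12√2 · δ(y,y')/δ(x,y)² whenever 2δ(y,y') ≤ δ(x,y). -/
open MeasureTheory Set

-- basic lemmas
lemma two_zpow_pos (j : ℤ) : (0:ℝ) < 2 ^ j := by positivity

lemma dyadicI_unique {j : ℤ} {k k' : ℕ} {t : ℝ}
    (h : t ∈ dyadicI j k) (h' : t ∈ dyadicI j k') : k = k' := by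
  obtain ⟨h1, h2⟩ := h; obtain ⟨h3, h4⟩ := h'
  have hp := two_zpow_pos (-j)
  have e1 : (k:ℝ) < (k':ℝ) + 1 := by
    rcases lt_or_ge (k:ℝ) ((k':ℝ)+1) with h | h
    · exact h
    · exact absurd (mul_le_mul_of_nonneg_right h hp.le) (by nlinarith)
  have e2 : (k':ℝ) < (k:ℝ) + 1 := by
    rcases lt_or_ge (k':ℝ) ((k:ℝ)+1) with h | h
    · exact h
    · exact absurd (mul_le_mul_of_nonneg_right h hp.le) (by nlinarith)
  have : k < k' + 1 := by exact_mod_cast e1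
  have : k' < k + 1 := by exact_mod_cast e2
  omega

lemma dyadicI_subset {i j : ℤ} (hij : i ≤ j) (k : ℕ) :
    dyadicI j k ⊆ dyadicI i (k / 2 ^ (j - i).toNat) := by
  intro t ht
  obtain ⟨h1, h2⟩ := ht
  set d : ℕ := (j - i).toNat with hd
  have hdz : (d : ℤ) = j - i := Int.toNat_of_nonneg (by omega)
  have hpow : (2:ℝ) ^ (-i) = (2:ℝ) ^ d * (2:ℝ) ^ (-j) := by
    rw [← zpow_natCast (2:ℝ) d, ← zpow_add₀ (by norm_num : (2:ℝ) ≠ 0)]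
    congr 1; omega
  set q : ℕ := k / 2 ^ d with hq
  have hql : q * 2 ^ d ≤ k := Nat.div_mul_le_self k _
  have hqu : k < (q + 1) * 2 ^ d := by
    rw [← Nat.div_lt_iff_lt_mul (Nat.two_pow_pos d)]
    omega
  constructor
  · calc (q:ℝ) * 2 ^ (-i) = ((q * 2 ^ d : ℕ) : ℝ) * 2 ^ (-j) := by
          rw [hpow]; push_cast; ring
    _ ≤ (k:ℝ) * 2 ^ (-j) := by
          apply mul_le_mul_of_nonneg_right _ (two_zpow_pos _).le
          exact_mod_cast hql
    _ ≤ t := h1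
  · calc t < ((k:ℝ) + 1) * 2 ^ (-j) := h2
    _ ≤ (((q+1) * 2 ^ d : ℕ) : ℝ) * 2 ^ (-j) := by
          apply mul_le_mul_of_nonneg_right _ (two_zpow_pos _).le
          push_cast
          have : (k:ℝ) + 1 ≤ ((q+1) * 2^d : ℕ) := by exact_mod_cast hqu
          push_cast at this; linarith
    _ = ((q:ℝ) + 1) * 2 ^ (-i) := by rw [hpow]; push_cast; ring

lemma indicator_agree {s i : ℤ} {m : ℕ} {t t' : ℝ}
    (ht : t ∈ dyadicI s m) (ht' : t' ∈ dyadicI s m) (his : i ≤ s) (k : ℕ) :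
    (dyadicI i k).indicator (fun _ => (1:ℝ)) t
      = (dyadicI i k).indicator (fun _ => (1:ℝ)) t' := by
  have key : t ∈ dyadicI i k ↔ t' ∈ dyadicI i k := by
    have h1 := dyadicI_subset his m ht
    have h2 := dyadicI_subset his m ht'
    constructor
    · intro h; rw [dyadicI_unique h h1]; exact h2
    · intro h; rw [dyadicI_unique h h2]; exact h1
  by_cases h : t ∈ dyadicI i k
  · rw [Set.indicator_of_mem h, Set.indicator_of_mem (key.mp h)]
  · rw [Set.indicator_of_notMem h, Set.indicator_of_notMem (fun hc => h (key.mpr hc))]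

lemma haar_agree {s : ℤ} {m : ℕ} {t t' : ℝ}
    (ht : t ∈ dyadicI s m) (ht' : t' ∈ dyadicI s m) {j : ℤ} (hj : j + 1 ≤ s) (k : ℕ) :
    haar j k t = haar j k t' := by
  unfold haar
  rw [indicator_agree ht ht' hj, indicator_agree ht ht' hj]

lemma dyadicI_child_subset₀ (j : ℤ) (k : ℕ) : dyadicI (j+1) (2*k) ⊆ dyadicI j k := by
  have := dyadicI_subset (by omega : j ≤ j + 1) (2*k)
  simpa using this

lemma dyadicI_child_subset₁ (j : ℤ) (k : ℕ) : dyadicI (j+1) (2*k+1) ⊆ dyadicI j k := by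
  have := dyadicI_subset (by omega : j ≤ j + 1) (2*k+1)
  have e : (2*k+1) / 2 ^ (j+1-j).toNat = k := by norm_num [Nat.add_mul_div_left]; omega
  rwa [e] at this

lemma haar_eq_zero {j : ℤ} {k : ℕ} {t : ℝ} (h : t ∉ dyadicI j k) : haar j k t = 0 := by
  unfold haar
  rw [Set.indicator_of_notMem (fun hc => h (dyadicI_child_subset₀ j k hc)),
      Set.indicator_of_notMem (fun hc => h (dyadicI_child_subset₁ j k hc))]
  ring

lemma abs_haar_le (j : ℤ) (k : ℕ) (t : ℝ) : |haar j k t| ≤ Real.sqrt ((2:ℝ) ^ j) := by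
  unfold haar
  rw [abs_mul, abs_of_nonneg (Real.sqrt_nonneg _)]
  have h0 : ∀ (S : Set ℝ), 0 ≤ S.indicator (fun _ => (1:ℝ)) t ∧ S.indicator (fun _ => (1:ℝ)) t ≤ 1 := by
    intro S; unfold Set.indicator; split <;> norm_num
  obtain ⟨a1, a2⟩ := h0 (dyadicI (j+1) (2*k)); obtain ⟨b1, b2⟩ := h0 (dyadicI (j+1) (2*k+1))
  have habs : |(dyadicI (j+1) (2*k)).indicator (fun _ => (1:ℝ)) t
      - (dyadicI (j+1) (2*k+1)).indicator (fun _ => (1:ℝ)) t| ≤ 1 :=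
    abs_le.mpr ⟨by linarith, by linarith⟩
  calc Real.sqrt ((2:ℝ)^j) * |_| ≤ Real.sqrt ((2:ℝ)^j) * 1 :=
        mul_le_mul_of_nonneg_left habs (Real.sqrt_nonneg _)
  _ = Real.sqrt ((2:ℝ)^j) := mul_one _

lemma delta_nonneg (x y : ℝ) : 0 ≤ delta x y := by
  unfold delta; split
  · exact le_refl _
  · exact Real.sInf_nonneg (fun L hL => by
      obtain ⟨j', k', h1, _⟩ := hL; rw [h1]; exact (two_zpow_pos _).le)

lemma delta_comm (x y : ℝ) : delta x y = delta y x := by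
  unfold delta
  have hset : {L : ℝ | ∃ j : ℤ, ∃ k : ℕ, L = (2:ℝ) ^ (-j) ∧ x ∈ dyadicI j k ∧ y ∈ dyadicI j k}
      = {L : ℝ | ∃ j : ℤ, ∃ k : ℕ, L = (2:ℝ) ^ (-j) ∧ y ∈ dyadicI j k ∧ x ∈ dyadicI j k} := by
    ext L; constructor <;> rintro ⟨j, k, h1, h2, h3⟩ <;> exact ⟨j, k, h1, h3, h2⟩
  rw [hset]
  by_cases h : x = y
  · rw [if_pos h, if_pos h.symm]
  · rw [if_neg h, if_neg (fun hc => h hc.symm)]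

lemma delta_le_of_mem {x y : ℝ} {j : ℤ} {k : ℕ}
    (hx : x ∈ dyadicI j k) (hy : y ∈ dyadicI j k) : delta x y ≤ (2:ℝ) ^ (-j) := by
  unfold delta; split
  · exact (two_zpow_pos _).le
  · apply csInf_le
    · exact ⟨0, fun L hL => by obtain ⟨j', k', h1, _⟩ := hL; rw [h1]; exact (two_zpow_pos _).le⟩
    · exact ⟨j, k, rfl, hx, hy⟩

lemma delta_spec {x y : ℝ} (hx : 0 ≤ x) (hy : 0 ≤ y) (hxy : x ≠ y) :
    ∃ j0 : ℤ, delta x y = (2:ℝ) ^ (-j0) ∧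
      ∀ j : ℤ, j ≤ j0 → ∃ k : ℕ, x ∈ dyadicI j k ∧ y ∈ dyadicI j k := by
  set P : ℤ → Prop := fun j => ∃ k : ℕ, x ∈ dyadicI j k ∧ y ∈ dyadicI j k with hP
  -- inhabited
  obtain ⟨n, hn⟩ := pow_unbounded_of_one_lt (max x y) (by norm_num : (1:ℝ) < 2)
  have hinh : ∃ j, P j := by
    have h2 : (2:ℝ) ^ (-(-(n:ℤ))) = 2 ^ n := by rw [neg_neg, zpow_natCast]
    have hmem : ∀ t : ℝ, 0 ≤ t → t ≤ max x y → t ∈ dyadicI (-(n:ℤ)) 0 := by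
      intro t ht1 ht2
      constructor
      · simpa using ht1
      · rw [h2]; push_cast; rw [zero_add, one_mul]; exact lt_of_le_of_lt ht2 hn
    exact ⟨-(n:ℤ), 0, hmem x hx (le_max_left _ _), hmem y hy (le_max_right _ _)⟩
  -- bounded
  have habs : 0 < |x - y| := abs_pos.mpr (sub_ne_zero.mpr hxy)
  obtain ⟨m, hm⟩ := exists_pow_lt_of_lt_one habs (by norm_num : (1:ℝ)/2 < 1)
  have hbdd : ∃ b : ℤ, ∀ j, P j → j ≤ b := by
    refine ⟨m, fun j hj => ?_⟩
    obtain ⟨k, ⟨hx1, hx2⟩, ⟨hy1, hy2⟩⟩ := hj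
    have hd : |x - y| < (2:ℝ) ^ (-j) := by
      rw [abs_sub_lt_iff]; constructor <;> nlinarith
    have h2 : ((1:ℝ)/2) ^ m = (2:ℝ) ^ (-(m:ℤ)) := by
      rw [one_div, inv_pow, ← zpow_natCast, ← zpow_neg]
    rw [h2] at hm
    have : (2:ℝ) ^ (-(m:ℤ)) < (2:ℝ) ^ (-j) := lt_trans hm hd
    have := (zpow_lt_zpow_iff_right₀ (by norm_num : (1:ℝ) < 2)).mp this
    omega
  obtain ⟨j0, hj0P, hj0max⟩ := Int.exists_greatest_of_bdd hbdd hinh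
  refine ⟨j0, ?_, fun j hj => ?_⟩
  · unfold delta
    rw [if_neg hxy]
    apply le_antisymm
    · apply csInf_le
      · exact ⟨0, fun L hL => by obtain ⟨j', k', h1, _⟩ := hL; rw [h1]; exact (two_zpow_pos _).le⟩
      · obtain ⟨k, hk⟩ := hj0P; exact ⟨j0, k, rfl, hk.1, hk.2⟩
    · apply le_csInf
      · obtain ⟨k, hk⟩ := hj0P; exact ⟨_, j0, k, rfl, hk.1, hk.2⟩
      · rintro L ⟨j', k', rfl, hx', hy'⟩
        have : j' ≤ j0 := hj0max j' ⟨k', hx', hy'⟩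
        exact (zpow_le_zpow_iff_right₀ (by norm_num : (1:ℝ) < 2)).mpr (by omega)
  · obtain ⟨k, hk1, hk2⟩ := hj0P
    exact ⟨_, dyadicI_subset hj k hk1, dyadicI_subset hj k hk2⟩

lemma delta_pos {x y : ℝ} (hx : 0 ≤ x) (hy : 0 ≤ y) (hxy : x ≠ y) : 0 < delta x y := by
  obtain ⟨j0, h, _⟩ := delta_spec hx hy hxy
  rw [h]; exact two_zpow_pos _


noncomputable def Fterm (x y : ℝ) (p : ℤ × ℕ) : ℝ :=
  haar p.1 p.2 y * (haar (p.1+1) (2*p.2) x - haar (p.1+1) (2*p.2+1) x)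

lemma Pker_eq (x y : ℝ) : Pker x y = ∑' p, Fterm x y p := rfl

lemma zpow_negsucc (j : ℤ) : (2:ℝ) ^ (-(j+1)) = (2:ℝ) ^ (-j) / 2 := by
  rw [neg_add, zpow_add₀ (by norm_num : (2:ℝ) ≠ 0)]
  norm_num
  ring

lemma Fterm_support {x y : ℝ} {j : ℤ} {k : ℕ} (h : Fterm x y (j,k) ≠ 0) :
    x ∈ dyadicI j k ∧ y ∈ dyadicI j k := by
  unfold Fterm at h; simp only at h
  have hy : haar j k y ≠ 0 := fun hc => h (by rw [hc]; ring)
  have hx : haar (j+1) (2*k) x - haar (j+1) (2*k+1) x ≠ 0 := fun hc => h (by rw [hc]; ring)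
  have hym : y ∈ dyadicI j k := by by_contra hc; exact hy (haar_eq_zero hc)
  have hxm : x ∈ dyadicI j k := by
    by_contra hc
    have h1 : haar (j+1) (2*k) x = 0 := haar_eq_zero (fun hm => hc (dyadicI_child_subset₀ j k hm))
    have h2 : haar (j+1) (2*k+1) x = 0 := haar_eq_zero (fun hm => hc (dyadicI_child_subset₁ j k hm))
    exact hx (by rw [h1, h2]; ring)
  exact ⟨hxm, hym⟩

lemma sqrt_prod (j : ℤ) :
    Real.sqrt ((2:ℝ)^j) * Real.sqrt ((2:ℝ)^(j+1)) = Real.sqrt 2 * 2 ^ j := by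
  rw [← Real.sqrt_mul (two_zpow_pos j).le]
  have h : (2:ℝ)^j * 2^(j+1) = 2 * ((2:ℝ)^j)^2 := by
    rw [zpow_add_one₀ (by norm_num : (2:ℝ) ≠ 0)]; ring
  rw [h, Real.sqrt_mul (by norm_num : (0:ℝ) ≤ 2), Real.sqrt_sq (two_zpow_pos j).le]

lemma abs_Fterm_le (x y : ℝ) (j : ℤ) (k : ℕ) :
    |Fterm x y (j,k)| ≤ 2 * Real.sqrt 2 * 2 ^ j := by
  unfold Fterm; simp only
  rw [abs_mul]
  have h2 : |haar (j+1) (2*k) x - haar (j+1) (2*k+1) x| ≤ 2 * Real.sqrt ((2:ℝ)^(j+1)) := by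
    calc |haar (j+1) (2*k) x - haar (j+1) (2*k+1) x|
        ≤ |haar (j+1) (2*k) x| + |haar (j+1) (2*k+1) x| := abs_sub _ _
      _ ≤ Real.sqrt ((2:ℝ)^(j+1)) + Real.sqrt ((2:ℝ)^(j+1)) :=
          add_le_add (abs_haar_le _ _ _) (abs_haar_le _ _ _)
      _ = 2 * Real.sqrt ((2:ℝ)^(j+1)) := by ring
  calc |haar j k y| * |haar (j+1) (2*k) x - haar (j+1) (2*k+1) x|
      ≤ Real.sqrt ((2:ℝ)^j) * (2 * Real.sqrt ((2:ℝ)^(j+1))) :=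
        mul_le_mul (abs_haar_le _ _ _) h2 (abs_nonneg _) (Real.sqrt_nonneg _)
    _ = 2 * (Real.sqrt ((2:ℝ)^j) * Real.sqrt ((2:ℝ)^(j+1))) := by ring
    _ = 2 * (Real.sqrt 2 * 2 ^ j) := by rw [sqrt_prod]
    _ = 2 * Real.sqrt 2 * 2 ^ j := by ring

lemma not_small_common {a b b' : ℝ} (hb : 0 ≤ b) (hb' : 0 ≤ b')
    (hδ : 0 < delta a b) (hcl : 2 * delta b b' ≤ delta a b) {j : ℤ} {k : ℕ}
    (ham : a ∈ dyadicI j k) (hb'm : b' ∈ dyadicI j k)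
    (hsmall : (2:ℝ) ^ (-j) < delta a b) : False := by
  by_cases hbb : b = b'
  · subst hbb
    exact absurd (delta_le_of_mem ham hb'm) (not_le.mpr hsmall)
  · obtain ⟨s, hs, hscomm⟩ := delta_spec hb hb' hbb
    obtain ⟨m, hbm, hb'm2⟩ := hscomm (min j s) (min_le_right _ _)
    have ham2 := dyadicI_subset (min_le_left j s) k ham
    have hb'm3 := dyadicI_subset (min_le_left j s) k hb'm
    have hme : m = k / 2 ^ (j - min j s).toNat := dyadicI_unique hb'm2 hb'm3
    have hab : delta a b ≤ 2 ^ (-(min j s)) := delta_le_of_mem ham2 (hme ▸ hbm)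
    rcases le_total j s with h | h
    · rw [min_eq_left h] at hab; linarith
    · rw [min_eq_right h] at hab; rw [← hs] at hab; linarith

lemma xfactor_agree {u u' : ℝ} (hu : 0 ≤ u) (hu' : 0 ≤ u') (j : ℤ) (k : ℕ)
    (h : delta u u' ≤ (2:ℝ) ^ (-(j+2))) :
    haar (j+1) (2*k) u - haar (j+1) (2*k+1) u
      = haar (j+1) (2*k) u' - haar (j+1) (2*k+1) u' := by
  by_cases huu : u = u'
  · rw [huu]
  · obtain ⟨s, hs, hscomm⟩ := delta_spec hu hu' huu
    have hjs : j + 2 ≤ s := by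
      rw [hs] at h
      have := (zpow_le_zpow_iff_right₀ (by norm_num : (1:ℝ) < 2)).mp h
      omega
    obtain ⟨m, h1, h2⟩ := hscomm (j+2) hjs
    rw [haar_agree h1 h2 (by omega) (2*k), haar_agree h1 h2 (by omega) (2*k+1)]

lemma yfactor_agree {u u' : ℝ} (hu : 0 ≤ u) (hu' : 0 ≤ u') (j : ℤ) (k : ℕ)
    (h : delta u u' ≤ (2:ℝ) ^ (-(j+1))) : haar j k u = haar j k u' := by
  by_cases huu : u = u'
  · rw [huu]
  · obtain ⟨s, hs, hscomm⟩ := delta_spec hu hu' huu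
    have hjs : j + 1 ≤ s := by
      rw [hs] at h
      have := (zpow_le_zpow_iff_right₀ (by norm_num : (1:ℝ) < 2)).mp h
      omega
    obtain ⟨m, h1, h2⟩ := hscomm (j+1) hjs
    exact haar_agree h1 h2 (by omega) k

/-- Hölder (Lipschitz) regularity of Petermichl's kernel: if `2δ(x,x') ≤ δ(x,y)` then
`|P(x',y) − P(x,y)| ≤ 18√2 δ(x,x')/δ(x,y)²`, and if `2δ(y,y') ≤ δ(x,y)` then
`|P(x,y') − P(x,y)| ≤ 12√2 δ(y,y')/δ(x,y)²`. -/
theorem Pker_regularity (x x' y y' : ℝ) (hx : 0 ≤ x) (hx' : 0 ≤ x') (hy : 0 ≤ y)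
    (hy' : 0 ≤ y') (hxy : x ≠ y) :
    (2 * delta x x' ≤ delta x y →
      |Pker x' y - Pker x y| ≤ 18 * Real.sqrt 2 * delta x x' / (delta x y) ^ 2) ∧
    (2 * delta y y' ≤ delta x y →
      |Pker x y' - Pker x y| ≤ 12 * Real.sqrt 2 * delta y y' / (delta x y) ^ 2) := by
  obtain ⟨j0, hδ, hcomm⟩ := delta_spec hx hy hxy
  obtain ⟨k0, hxk0, hyk0⟩ := hcomm j0 le_rfl
  have hδpos : 0 < delta x y := by rw [hδ]; exact two_zpow_pos _
  have hyx : delta y x = delta x y := delta_comm y x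
  constructor
  · -- regularity in x
    intro h1
    have claimA : ∀ p : ℤ × ℕ, p ≠ (j0, k0) → Fterm x' y p = Fterm x y p := by
      rintro ⟨j, k⟩ hp
      by_cases hs : (2:ℝ) ^ (-j) < delta x y
      · have hz : Fterm x y (j,k) = 0 := by
          by_contra hc
          obtain ⟨hxm, hym⟩ := Fterm_support hc
          exact absurd (delta_le_of_mem hxm hym) (not_le.mpr hs)
        have hz' : Fterm x' y (j,k) = 0 := by
          by_contra hc
          obtain ⟨hx'm, hym⟩ := Fterm_support hc
          exact not_small_common hx hx' (hyx ▸ hδpos) (hyx ▸ h1) hym hx'm (hyx ▸ hs)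
        rw [hz, hz']
      · push_neg at hs
        by_cases hy0 : haar j k y = 0
        · unfold Fterm; simp only; rw [hy0]; ring
        · have hym : y ∈ dyadicI j k := by by_contra hc; exact hy0 (haar_eq_zero hc)
          have hj : j ≤ j0 := by
            rw [hδ] at hs
            have := (zpow_le_zpow_iff_right₀ (by norm_num : (1:ℝ) < 2)).mp hs
            omega
          have hjlt : j < j0 := by
            rcases lt_or_eq_of_le hj with h | h
            · exact h
            · exfalso; subst h; exact hp (by rw [dyadicI_unique hym hyk0])
          have hdle : delta x x' ≤ (2:ℝ) ^ (-(j+2)) := by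
            have e1 : (2:ℝ) ^ (-(j0+1)) ≤ 2 ^ (-(j+2)) :=
              (zpow_le_zpow_iff_right₀ (by norm_num : (1:ℝ) < 2)).mpr (by omega)
            have e2 : (2:ℝ) ^ (-(j0+1)) = delta x y / 2 := by
              rw [zpow_negsucc, hδ]
            linarith
          have := xfactor_agree hx hx' j k hdle
          unfold Fterm; simp only; rw [this]
    set G : ℤ × ℕ → ℝ := fun p => Fterm x' y p - Fterm x y p with hG
    have hGsupp : ∀ p : ℤ × ℕ, p ≠ (j0,k0) → G p = 0 := by
      intro p hp; rw [hG]; simp only; rw [claimA p hp, sub_self]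
    have hGsum : Summable G :=
      summable_of_ne_finset_zero (s := {(j0,k0)})
        (fun p hp => hGsupp p (by simpa using hp))
    have hkey : |Pker x' y - Pker x y| ≤ |G (j0, k0)| := by
      by_cases hsum : Summable (Fterm x y)
      · have hsum' : Summable (Fterm x' y) := by
          have he : Fterm x' y = fun p => Fterm x y p + G p := by
            funext p; rw [hG]; simp only; ring
          rw [he]; exact hsum.add hGsum
        have : Pker x' y - Pker x y = G (j0, k0) := by
          rw [Pker_eq, Pker_eq, ← Summable.tsum_sub hsum' hsum]
          exact tsum_eq_single (j0,k0) hGsupp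
        rw [this]
      · have hsum' : ¬ Summable (Fterm x' y) := by
          intro hc
          have he : Fterm x y = fun p => Fterm x' y p - G p := by
            funext p; rw [hG]; simp only; ring
          exact hsum (he ▸ hc.sub hGsum)
        rw [Pker_eq, Pker_eq, tsum_eq_zero_of_not_summable hsum,
          tsum_eq_zero_of_not_summable hsum']
        simpa using abs_nonneg (G (j0,k0))
    have hRHSnn : 0 ≤ 18 * Real.sqrt 2 * delta x x' / (delta x y) ^ 2 := by
      apply div_nonneg _ (sq_nonneg _)
      have := Real.sqrt_nonneg 2
      have := delta_nonneg x x'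
      nlinarith
    by_cases h4 : 4 * delta x x' ≤ delta x y
    · -- the exceptional term also vanishes
      have hdle : delta x x' ≤ (2:ℝ) ^ (-(j0+2)) := by
        have e2 : (2:ℝ) ^ (-(j0+2)) = delta x y / 4 := by
          have : j0 + 2 = (j0 + 1) + 1 := by ring
          rw [this, zpow_negsucc, zpow_negsucc, hδ]; ring
        linarith
      have hX := xfactor_agree hx hx' j0 k0 hdle
      have hg0 : G (j0, k0) = 0 := by
        rw [hG]; simp only; unfold Fterm; simp only; rw [hX]; ring
      calc |Pker x' y - Pker x y| ≤ |G (j0,k0)| := hkey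
        _ = 0 := by rw [hg0, abs_zero]
        _ ≤ _ := hRHSnn
    · push_neg at h4
      have hGbound : |G (j0,k0)| ≤ 4 * Real.sqrt 2 * 2 ^ j0 := by
        rw [hG]; simp only
        calc |Fterm x' y (j0,k0) - Fterm x y (j0,k0)|
            ≤ |Fterm x' y (j0,k0)| + |Fterm x y (j0,k0)| := abs_sub _ _
          _ ≤ 2 * Real.sqrt 2 * 2 ^ j0 + 2 * Real.sqrt 2 * 2 ^ j0 :=
              add_le_add (abs_Fterm_le _ _ _ _) (abs_Fterm_le _ _ _ _)
          _ = 4 * Real.sqrt 2 * 2 ^ j0 := by ring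
      have hsq : (2:ℝ) ^ j0 * (delta x y) ^ 2 = delta x y := by
        rw [hδ, sq, ← zpow_add₀ (by norm_num : (2:ℝ) ≠ 0),
          ← zpow_add₀ (by norm_num : (2:ℝ) ≠ 0)]
        norm_num
      have hfin : 4 * Real.sqrt 2 * 2 ^ j0 ≤ 18 * Real.sqrt 2 * delta x x' / (delta x y) ^ 2 := by
        rw [le_div_iff₀ (by positivity : (0:ℝ) < (delta x y)^2)]
        have e : 4 * Real.sqrt 2 * 2 ^ j0 * (delta x y)^2 = 4 * Real.sqrt 2 * delta x y := by
          rw [mul_assoc (4 * Real.sqrt 2), hsq]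
        rw [e]
        nlinarith [Real.sqrt_nonneg 2, delta_nonneg x x',
          mul_le_mul_of_nonneg_left h4.le (Real.sqrt_nonneg 2)]
      exact le_trans hkey (le_trans hGbound hfin)
  · -- regularity in y
    intro h2
    have claimB : ∀ p : ℤ × ℕ, Fterm x y' p = Fterm x y p := by
      rintro ⟨j, k⟩
      by_cases hs : (2:ℝ) ^ (-j) < delta x y
      · have hz : Fterm x y (j,k) = 0 := by
          by_contra hc
          obtain ⟨hxm, hym⟩ := Fterm_support hc
          exact absurd (delta_le_of_mem hxm hym) (not_le.mpr hs)
        have hz' : Fterm x y' (j,k) = 0 := by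
          by_contra hc
          obtain ⟨hxm, hy'm⟩ := Fterm_support hc
          exact not_small_common hy hy' hδpos h2 hxm hy'm hs
        rw [hz, hz']
      · push_neg at hs
        have hdle : delta y y' ≤ (2:ℝ) ^ (-(j+1)) := by
          rw [zpow_negsucc]; linarith
        have := yfactor_agree hy hy' j k hdle
        unfold Fterm; simp only; rw [this]
    have heq : Pker x y' = Pker x y := by
      rw [Pker_eq, Pker_eq]; exact tsum_congr claimB
    rw [heq, sub_self, abs_zero]
    apply div_nonneg _ (sq_nonneg _)
    have := Real.sqrt_nonneg 2
    have := delta_nonneg y y'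
    nlinarith
end
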